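/- For a C² vector field s : ℝᵈ → ℝᵈ and any point x, the divergence of s at x equals the limit as κ → 0 of (1/(2κ))·[E_ξ(s(x+κξ)·ξ) - E_ξ(s(x-κξ)·ξ)], where ξ is a standard Gaussian random vector in ℝᵈ. -/

import Mathlib

/-!
Expand `s` to first order around `x`: `s (x ± κξ) = s x ± κ A ξ + O(κ² ‖ξ‖²)` with
`A = Ds(x)`, the remainder being controlled by the bound on the second derivative. In the
symmetric difference quotient the constant terms cancel, leaving `⟪A ξ, ξ⟫ + O(κ ‖ξ‖³)`, and
since a standard Gaussian has finite third moment the error integrates to `O(κ)`. Finally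
`E ⟪A ξ, ξ⟫ = tr A` because the covariance of a standard Gaussian is the identity.
-/

open MeasureTheory ProbabilityTheory Filter
open scoped RealInnerProductSpace Topology

noncomputable def divergence {d : ℕ}
    (w : EuclideanSpace ℝ (Fin d) → EuclideanSpace ℝ (Fin d))
    (x : EuclideanSpace ℝ (Fin d)) : ℝ :=
  ∑ i, fderiv ℝ w x (EuclideanSpace.single i 1) i

section Taylor

variable {E F : Type*} [NormedAddCommGroup E] [NormedSpace ℝ E] [NormedAddCommGroup F]
  [NormedSpace ℝ F] {s : E → F} {M : ℝ}

theorem norm_fderiv_sub_fderiv_le (hs : ContDiff ℝ 2 s)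
    (hM : ∀ z, ‖iteratedFDeriv ℝ 2 s z‖ ≤ M) (a b : E) :
    ‖fderiv ℝ s a - fderiv ℝ s b‖ ≤ M * ‖a - b‖ := by
  have hs' : ContDiff ℝ 1 (fderiv ℝ s) := hs.fderiv_right (by norm_num)
  refine convex_univ.norm_image_sub_le_of_norm_fderiv_le
    (fun z _ => (hs'.differentiable one_ne_zero).differentiableAt) (fun z _ => ?_)
    (Set.mem_univ b) (Set.mem_univ a)
  have h2 := norm_iteratedFDeriv_fderiv (𝕜 := ℝ) (n := 1) (f := s) (x := z)
  rw [norm_iteratedFDeriv_one] at h2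
  exact h2 ▸ hM z

theorem norm_sub_sub_fderiv_apply_le (hs : ContDiff ℝ 2 s)
    (hM : ∀ z, ‖iteratedFDeriv ℝ 2 s z‖ ≤ M) (x h : E) :
    ‖s (x + h) - s x - fderiv ℝ s x h‖ ≤ M * ‖h‖ ^ 2 := by
  have hM0 : 0 ≤ M := (norm_nonneg _).trans (hM x)
  have key := (convex_closedBall x ‖h‖).norm_image_sub_le_of_norm_fderiv_le'
    (fun z _ => (hs.differentiable two_ne_zero).differentiableAt)
    (fun z hz => (norm_fderiv_sub_fderiv_le hs hM z x).trans
      (mul_le_mul_of_nonneg_left (mem_closedBall_iff_norm.mp hz) hM0))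
    (Metric.mem_closedBall_self (norm_nonneg h)) (y := x + h) (by simp)
  simpa [sq, mul_assoc] using key

end Taylor

section Inner

variable {E : Type*} [NormedAddCommGroup E] [InnerProductSpace ℝ E] {s : E → E} {M : ℝ}

theorem abs_symmDiffQuot_inner_sub_inner_fderiv_le (hs : ContDiff ℝ 2 s)
    (hM : ∀ z, ‖iteratedFDeriv ℝ 2 s z‖ ≤ M) (x ξ : E) {κ : ℝ} (hκ : κ ≠ 0) :
    |1 / (2 * κ) * (⟪s (x + κ • ξ), ξ⟫ - ⟪s (x - κ • ξ), ξ⟫) - ⟪fderiv ℝ s x ξ, ξ⟫|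
      ≤ M * |κ| * ‖ξ‖ ^ 3 := by
  set A := fderiv ℝ s x
  set rp := s (x + κ • ξ) - s x - A (κ • ξ)
  set rm := s (x + -κ • ξ) - s x - A (-κ • ξ)
  have hrp : ‖rp‖ ≤ M * κ ^ 2 * ‖ξ‖ ^ 2 := by
    calc ‖rp‖ ≤ M * ‖κ • ξ‖ ^ 2 := norm_sub_sub_fderiv_apply_le hs hM x (κ • ξ)
      _ = M * κ ^ 2 * ‖ξ‖ ^ 2 := by rw [norm_smul, Real.norm_eq_abs, mul_pow, sq_abs, mul_assoc]
  have hrm : ‖rm‖ ≤ M * κ ^ 2 * ‖ξ‖ ^ 2 := by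
    calc ‖rm‖ ≤ M * ‖-κ • ξ‖ ^ 2 := norm_sub_sub_fderiv_apply_le hs hM x (-κ • ξ)
      _ = M * κ ^ 2 * ‖ξ‖ ^ 2 := by
        rw [norm_smul, Real.norm_eq_abs, mul_pow, sq_abs, neg_sq, mul_assoc]
  have hsplit : 1 / (2 * κ) * (⟪s (x + κ • ξ), ξ⟫ - ⟪s (x - κ • ξ), ξ⟫) - ⟪A ξ, ξ⟫
      = 1 / (2 * κ) * ⟪rp - rm, ξ⟫ := by
    simp only [rp, rm, neg_smul, ← sub_eq_add_neg, map_smul, map_neg, inner_sub_left,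
      inner_neg_left, real_inner_smul_left]
    field_simp
    ring
  rw [hsplit, abs_mul, abs_div, abs_one, abs_mul, abs_two]
  calc 1 / (2 * |κ|) * |⟪rp - rm, ξ⟫|
      ≤ 1 / (2 * |κ|) * ((M * κ ^ 2 * ‖ξ‖ ^ 2 + M * κ ^ 2 * ‖ξ‖ ^ 2) * ‖ξ‖) := by
        gcongr
        exact (abs_real_inner_le_norm _ _).trans
          (mul_le_mul_of_nonneg_right ((norm_sub_le _ _).trans (add_le_add hrp hrm))
            (norm_nonneg _))
    _ = M * |κ| * ‖ξ‖ ^ 3 := by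
        rw [← sq_abs κ]
        field_simp
        ring

variable [SecondCountableTopology E] [MeasurableSpace E] [BorelSpace E] {μ : Measure E}
  [IsFiniteMeasure μ]

theorem integrable_inner_apply_self (hμ : Integrable (fun ξ => ‖ξ‖ ^ 3) μ) (A : E →L[ℝ] E) :
    Integrable (fun ξ => ⟪A ξ, ξ⟫) μ := by
  refine ((integrable_norm_pow_of_le aestronglyMeasurable_id (by norm_num : 2 ≤ 3) hμ).const_mul
    ‖A‖).mono' (by fun_prop) (ae_of_all _ fun ξ => ?_)
  calc ‖⟪A ξ, ξ⟫‖ ≤ ‖A ξ‖ * ‖ξ‖ := norm_inner_le_norm _ _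
    _ ≤ ‖A‖ * ‖ξ‖ * ‖ξ‖ := by gcongr; exact A.le_opNorm ξ
    _ = ‖A‖ * ‖ξ‖ ^ 2 := by ring

theorem integrable_inner_comp_add_smul (hμ : Integrable (fun ξ => ‖ξ‖ ^ 3) μ)
    (hs : ContDiff ℝ 2 s) (hM : ∀ z, ‖iteratedFDeriv ℝ 2 s z‖ ≤ M) (x : E) (κ : ℝ) :
    Integrable (fun ξ => ⟪s (x + κ • ξ), ξ⟫) μ := by
  set A := fderiv ℝ s x
  have hpow (k : ℕ) (hk : k ≤ 3) : Integrable (fun ξ : E => ‖ξ‖ ^ k) μ :=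
    integrable_norm_pow_of_le aestronglyMeasurable_id hk hμ
  have hcont : Continuous fun ξ => ⟪s (x + κ • ξ), ξ⟫ := by
    have := hs.continuous
    fun_prop
  refine ((((hpow 1 (by norm_num)).const_mul ‖s x‖).add
    ((hpow 2 (by norm_num)).const_mul (‖A‖ * |κ|))).add
    ((hpow 3 le_rfl).const_mul (M * κ ^ 2))).mono' hcont.aestronglyMeasurable
    (ae_of_all _ fun ξ => ?_)
  have hs_le : ‖s (x + κ • ξ)‖ ≤ ‖s x‖ + ‖A‖ * |κ| * ‖ξ‖ + M * κ ^ 2 * ‖ξ‖ ^ 2 := by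
    calc ‖s (x + κ • ξ)‖ = ‖s x + A (κ • ξ) + (s (x + κ • ξ) - s x - A (κ • ξ))‖ := by
          congr 1; abel
      _ ≤ ‖s x‖ + ‖A (κ • ξ)‖ + ‖s (x + κ • ξ) - s x - A (κ • ξ)‖ := norm_add₃_le
      _ ≤ ‖s x‖ + ‖A‖ * ‖κ • ξ‖ + M * ‖κ • ξ‖ ^ 2 :=
          add_le_add (add_le_add le_rfl (A.le_opNorm _)) (norm_sub_sub_fderiv_apply_le hs hM x _)
      _ = ‖s x‖ + ‖A‖ * |κ| * ‖ξ‖ + M * κ ^ 2 * ‖ξ‖ ^ 2 := by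
          rw [norm_smul, Real.norm_eq_abs, mul_pow, sq_abs]; ring
  calc ‖⟪s (x + κ • ξ), ξ⟫‖ ≤ ‖s (x + κ • ξ)‖ * ‖ξ‖ := norm_inner_le_norm _ _
    _ ≤ (‖s x‖ + ‖A‖ * |κ| * ‖ξ‖ + M * κ ^ 2 * ‖ξ‖ ^ 2) * ‖ξ‖ := by gcongr
    _ = _ := by simp only [Pi.add_apply]; ring

theorem tendsto_symmDiffQuot_integral_inner (hμ : Integrable (fun ξ => ‖ξ‖ ^ 3) μ)
    (hs : ContDiff ℝ 2 s) (hM : ∀ z, ‖iteratedFDeriv ℝ 2 s z‖ ≤ M) (x : E) :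
    Tendsto (fun κ : ℝ => 1 / (2 * κ) *
        ((∫ ξ, ⟪s (x + κ • ξ), ξ⟫ ∂μ) - ∫ ξ, ⟪s (x - κ • ξ), ξ⟫ ∂μ))
      (𝓝[≠] 0) (𝓝 (∫ ξ, ⟪fderiv ℝ s x ξ, ξ⟫ ∂μ)) := by
  have hbound : ∀ κ : ℝ, κ ≠ 0 → ‖1 / (2 * κ) * ((∫ ξ, ⟪s (x + κ • ξ), ξ⟫ ∂μ)
      - ∫ ξ, ⟪s (x - κ • ξ), ξ⟫ ∂μ) - ∫ ξ, ⟪fderiv ℝ s x ξ, ξ⟫ ∂μ‖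
      ≤ |κ| * (M * ∫ ξ, ‖ξ‖ ^ 3 ∂μ) := by
    intro κ hκ
    have hminus : Integrable (fun ξ => ⟪s (x - κ • ξ), ξ⟫) μ := by
      simpa only [sub_eq_add_neg, neg_smul] using
        integrable_inner_comp_add_smul hμ hs hM x (-κ)
    have hplus := integrable_inner_comp_add_smul hμ hs hM x κ
    have hquot : Integrable (fun ξ => 1 / (2 * κ) * (⟪s (x + κ • ξ), ξ⟫ - ⟪s (x - κ • ξ), ξ⟫)) μ :=
      (hplus.sub hminus).const_mul _
    rw [← integral_sub hplus hminus, ← integral_const_mul,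
      ← integral_sub hquot (integrable_inner_apply_self hμ _)]
    calc _ ≤ ∫ ξ, M * |κ| * ‖ξ‖ ^ 3 ∂μ := norm_integral_le_of_norm_le (hμ.const_mul _)
          (ae_of_all _ fun ξ => abs_symmDiffQuot_inner_sub_inner_fderiv_le hs hM x ξ hκ)
      _ = |κ| * (M * ∫ ξ, ‖ξ‖ ^ 3 ∂μ) := by rw [integral_const_mul]; ring
  refine tendsto_iff_norm_sub_tendsto_zero.2 (squeeze_zero_norm'
    (eventually_nhdsWithin_of_forall fun κ hκ => (norm_norm _).trans_le (hbound κ hκ)) ?_)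
  have h0 : Tendsto (fun κ : ℝ => |κ| * (M * ∫ ξ, ‖ξ‖ ^ 3 ∂μ)) (𝓝 0) (𝓝 0) := by
    have hc : Continuous fun κ : ℝ => |κ| * (M * ∫ ξ, ‖ξ‖ ^ 3 ∂μ) := by fun_prop
    simpa using hc.tendsto 0
  exact h0.mono_left nhdsWithin_le_nhds

end Inner

theorem integral_inner_apply_self_stdGaussian {E ι : Type*} [NormedAddCommGroup E]
    [InnerProductSpace ℝ E] [FiniteDimensional ℝ E] [MeasurableSpace E] [BorelSpace E]
    [Fintype ι] (b : OrthonormalBasis ι ℝ E) (A : E →L[ℝ] E) :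
    ∫ ξ, ⟪A ξ, ξ⟫ ∂stdGaussian E = ∑ i, ⟪A (b i), b i⟫ := by
  have hL2 (v : E) : MemLp (fun ξ => ⟪v, ξ⟫) 2 (stdGaussian E) :=
    (innerSL ℝ v).comp_memLp' IsGaussian.memLp_two_id
  have hexpand (ξ : E) : ⟪A ξ, ξ⟫ = ∑ i, ⟪b i, ξ⟫ * ⟪A (b i), ξ⟫ := by
    have hAξ : A ξ = ∑ i, ⟪b i, ξ⟫ • A (b i) := by
      conv_lhs => rw [← b.sum_repr' ξ]
      simp only [map_sum, map_smul]
    simp only [hAξ, sum_inner, real_inner_smul_left]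
  have hint (i : ι) : Integrable (fun ξ => ⟪b i, ξ⟫ * ⟪A (b i), ξ⟫) (stdGaussian E) :=
    (hL2 (b i)).integrable_mul (hL2 (A (b i)))
  rw [integral_congr_ae (ae_of_all _ hexpand), integral_finsetSum _ fun i _ => hint i]
  refine Finset.sum_congr rfl fun i _ => ?_
  have hcov := covarianceBilin_apply (IsGaussian.memLp_two_id (μ := stdGaussian E)) (b i) (A (b i))
  simp only [covarianceBilin_stdGaussian, id_eq, integral_id_stdGaussian, sub_zero] at hcov
  rw [← hcov, innerSL_apply_apply, real_inner_comm]

theorem divergence_eq_integral_inner_fderiv_stdGaussian {d : ℕ}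
    (s : EuclideanSpace ℝ (Fin d) → EuclideanSpace ℝ (Fin d)) (x : EuclideanSpace ℝ (Fin d)) :
    divergence s x = ∫ ξ, ⟪fderiv ℝ s x ξ, ξ⟫ ∂stdGaussian (EuclideanSpace ℝ (Fin d)) := by
  rw [integral_inner_apply_self_stdGaussian (EuclideanSpace.basisFun (Fin d) ℝ)]
  simp [divergence, EuclideanSpace.inner_single_right]

/-- For a C² vector field `s` with bounded second derivatives, the divergence at `x` is the
limit as `κ → 0⁺` of `(1/(2κ))·[E_ξ ⟪s(x+κξ), ξ⟫ - E_ξ ⟪s(x-κξ), ξ⟫]` where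
`ξ ∼ N(0, I_d)` is a standard Gaussian vector. -/
theorem stmt_3 {d : ℕ}
    (s : EuclideanSpace ℝ (Fin d) → EuclideanSpace ℝ (Fin d))
    (hs : ContDiff ℝ 2 s)
    (hbdd : ∃ M : ℝ, ∀ x, ‖iteratedFDeriv ℝ 2 s x‖ ≤ M)
    (μ : Measure (EuclideanSpace ℝ (Fin d)))
    (hμ : μ = (Measure.pi fun _ : Fin d => gaussianReal 0 1 :
      Measure (∀ _ : Fin d, ℝ)).map (MeasurableEquiv.toLp 2 (Fin d → ℝ)))
    (x : EuclideanSpace ℝ (Fin d)) :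
    Tendsto
      (fun κ : ℝ => (1 / (2 * κ)) *
        ((∫ ξ, ⟪s (x + κ • ξ), ξ⟫ ∂μ) - ∫ ξ, ⟪s (x - κ • ξ), ξ⟫ ∂μ))
      (𝓝[>] 0) (𝓝 (divergence s x)) := by
  obtain ⟨M, hM⟩ := hbdd
  obtain rfl : μ = stdGaussian (EuclideanSpace ℝ (Fin d)) := hμ.trans map_pi_eq_stdGaussian
  rw [divergence_eq_integral_inner_fderiv_stdGaussian]
  have hmoment := (IsGaussian.memLp_id (stdGaussian (EuclideanSpace ℝ (Fin d))) (3 : ℕ)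
    (by simp)).integrable_norm_pow'
  exact (tendsto_symmDiffQuot_integral_inner hmoment hs hM x).mono_left (nhdsGT_le_nhdsNE 0)
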